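/- Let μ^L ≤ μ^U and 0 < Σ^L ≤ Σ^U. Then min over μ ∈ [μ^L, μ^U] and Σ ∈ [Σ^L, Σ^U] of ∫_a^b N(f | μ, Σ) df is attained at μ equal to the endpoint of [μ^L, μ^U] farthest from (a+b)/2, and at Σ ∈ {Σ^L, Σ^U}. -/

import Mathlib

open MeasureTheory

/-- The density of a normal distribution with mean μ and variance V at f. -/
noncomputable def gaussPDF (μ V f : ℝ) : ℝ :=
  (Real.sqrt (2 * Real.pi * V))⁻¹ * Real.exp (-((f - μ) ^ 2) / (2 * V))

namespace Stmt6

noncomputable def φ (x : ℝ) : ℝ := gaussPDF 0 1 x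

noncomputable def Φ (x : ℝ) : ℝ := ∫ t in (0:ℝ)..x, φ t

lemma φ_def (x : ℝ) : φ x = (Real.sqrt (2*Real.pi))⁻¹ * Real.exp (-(x^2)/2) := by
  simp [φ, gaussPDF]

lemma continuous_φ : Continuous φ := by
  simp only [funext φ_def]
  fun_prop

lemma φ_even (x : ℝ) : φ (-x) = φ x := by simp [φ_def]

lemma φ_pos (x : ℝ) : 0 < φ x := by
  rw [φ_def]
  positivity

lemma hasDerivAt_Φ (x : ℝ) : HasDerivAt Φ (φ x) x :=
  intervalIntegral.integral_hasDerivAt_right (continuous_φ.intervalIntegrable _ _)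
    continuous_φ.aestronglyMeasurable.stronglyMeasurableAtFilter continuous_φ.continuousAt

lemma Φ_neg (x : ℝ) : Φ (-x) = -Φ x := by
  have h : Φ x = ∫ t in (0:ℝ)..x, (fun s => φ (-s)) t := by
    simp [Φ, φ_even]
  rw [h, intervalIntegral.integral_comp_neg, intervalIntegral.integral_symm]
  simp [Φ]

lemma pdf_shift (μ V f : ℝ) : gaussPDF μ V f = gaussPDF 0 V (f - μ) := by
  simp [gaussPDF]

lemma pdf_scale (V : ℝ) (hV : 0 < V) (t : ℝ) :
    gaussPDF 0 V t = (Real.sqrt V)⁻¹ * φ (t / Real.sqrt V) := by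
  have hsV : 0 < Real.sqrt V := Real.sqrt_pos.mpr hV
  have h2pi : (0:ℝ) < 2 * Real.pi := by positivity
  rw [φ_def, gaussPDF]
  have h1 : Real.sqrt (2 * Real.pi * V) = Real.sqrt (2 * Real.pi) * Real.sqrt V :=
    Real.sqrt_mul (le_of_lt h2pi) V
  have h2 : (t / Real.sqrt V) ^ 2 = t ^ 2 / V := by
    rw [div_pow, Real.sq_sqrt hV.le]
  rw [h1, h2]
  have : -(t ^ 2 / V) / 2 = -(t - 0) ^ 2 / (2 * V) := by
    rw [sub_zero]
    ring
  rw [← this, mul_inv]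
  ring

lemma repr (μ V : ℝ) (hV : 0 < V) (a b : ℝ) :
    ∫ f in a..b, gaussPDF μ V f
      = Φ ((b - μ) / Real.sqrt V) - Φ ((a - μ) / Real.sqrt V) := by
  have hsV : 0 < Real.sqrt V := Real.sqrt_pos.mpr hV
  calc ∫ f in a..b, gaussPDF μ V f
      = ∫ f in a..b, gaussPDF 0 V (f - μ) := by simp [pdf_shift]
    _ = ∫ t in (a - μ)..(b - μ), gaussPDF 0 V t :=
        intervalIntegral.integral_comp_sub_right _ μ
    _ = ∫ t in (a - μ)..(b - μ), (Real.sqrt V)⁻¹ * φ (t / Real.sqrt V) := by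
        simp only [pdf_scale V hV]
    _ = (Real.sqrt V)⁻¹ * ∫ t in (a - μ)..(b - μ), φ (t / Real.sqrt V) := by
        rw [← intervalIntegral.integral_const_mul]
    _ = (Real.sqrt V)⁻¹ * (Real.sqrt V *
          ∫ t in ((a - μ)/Real.sqrt V)..((b - μ)/Real.sqrt V), φ t) := by
        rw [intervalIntegral.integral_comp_div _ hsV.ne', smul_eq_mul]
    _ = ∫ t in ((a - μ)/Real.sqrt V)..((b - μ)/Real.sqrt V), φ t := by
        rw [← mul_assoc, inv_mul_cancel₀ hsV.ne', one_mul]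
    _ = Φ ((b - μ) / Real.sqrt V) - Φ ((a - μ) / Real.sqrt V) := by
        rw [Φ, Φ, intervalIntegral.integral_interval_sub_left
          (continuous_φ.intervalIntegrable _ _) (continuous_φ.intervalIntegrable _ _)]


lemma φ_le_φ {x y : ℝ} (h : y ^ 2 ≤ x ^ 2) : φ x ≤ φ y := by
  rw [φ_def, φ_def]
  have : Real.exp (-x ^ 2 / 2) ≤ Real.exp (-y ^ 2 / 2) := by
    apply Real.exp_le_exp.mpr; linarith
  have h0 : (0:ℝ) ≤ (Real.sqrt (2 * Real.pi))⁻¹ := by positivity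
  exact mul_le_mul_of_nonneg_left this h0

lemma hasDerivAt_g (a b V μ : ℝ) :
    HasDerivAt (fun μ => Φ ((b - μ) / Real.sqrt V) - Φ ((a - μ) / Real.sqrt V))
      ((φ ((a - μ) / Real.sqrt V) - φ ((b - μ) / Real.sqrt V)) / Real.sqrt V) μ := by
  have hb : HasDerivAt (fun μ : ℝ => (b - μ) / Real.sqrt V) (-1 / Real.sqrt V) μ :=
    ((hasDerivAt_id μ).const_sub b).div_const _
  have ha : HasDerivAt (fun μ : ℝ => (a - μ) / Real.sqrt V) (-1 / Real.sqrt V) μ :=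
    ((hasDerivAt_id μ).const_sub a).div_const _
  have Hb := (hasDerivAt_Φ ((b - μ) / Real.sqrt V)).comp μ hb
  have Ha := (hasDerivAt_Φ ((a - μ) / Real.sqrt V)).comp μ ha
  refine (Hb.sub Ha).congr_deriv ?_
  ring

lemma mu_anti (a b V : ℝ) (hab : a ≤ b) :
    AntitoneOn (fun μ => Φ ((b - μ) / Real.sqrt V) - Φ ((a - μ) / Real.sqrt V))
      (Set.Ici ((a + b) / 2)) := by
  set s := Real.sqrt V with hs
  have hs0 : 0 ≤ s := Real.sqrt_nonneg V
  have hcont : Continuous (fun μ => Φ ((b - μ) / s) - Φ ((a - μ) / s)) := by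
    rw [continuous_iff_continuousAt]
    exact fun x => (hasDerivAt_g a b V x).continuousAt
  apply antitoneOn_of_deriv_nonpos (convex_Ici _) hcont.continuousOn
  · intro x hx
    exact (hasDerivAt_g a b V x).differentiableAt.differentiableWithinAt
  · intro x hx
    rw [(hasDerivAt_g a b V x).deriv]
    have hx' : (a + b) / 2 ≤ x := le_of_lt (by simpa using hx)
    have hsq : ((b - x) / s) ^ 2 ≤ ((a - x) / s) ^ 2 := by
      rw [div_pow, div_pow]
      have hnum : (b - x) ^ 2 ≤ (a - x) ^ 2 := by nlinarith
      have hden : (0:ℝ) ≤ s ^ 2 := sq_nonneg s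
      rcases eq_or_lt_of_le hden with h | h
      · rw [← h]; simp
      · gcongr
    have hφ := φ_le_φ hsq
    have hle : φ ((a - x) / s) - φ ((b - x) / s) ≤ 0 := by linarith
    exact div_nonpos_iff.mpr (Or.inr ⟨hle, hs0⟩)


noncomputable def gmu (a b V μ : ℝ) : ℝ :=
  Φ ((b - μ) / Real.sqrt V) - Φ ((a - μ) / Real.sqrt V)

lemma mu_symm (a b V d : ℝ) :
    gmu a b V ((a + b) / 2 + d) = gmu a b V ((a + b) / 2 - d) := by
  unfold gmu
  have e1 : (a - ((a + b) / 2 + d)) / Real.sqrt V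
      = -((b - ((a + b) / 2 - d)) / Real.sqrt V) := by ring
  have e2 : (a - ((a + b) / 2 - d)) / Real.sqrt V
      = -((b - ((a + b) / 2 + d)) / Real.sqrt V) := by ring
  rw [e1, e2, Φ_neg, Φ_neg]
  ring

lemma mu_key (a b V : ℝ) (hab : a ≤ b) {x y : ℝ}
    (h : |y - (a + b) / 2| ≤ |x - (a + b) / 2|) :
    gmu a b V x ≤ gmu a b V y := by
  set m := (a + b) / 2 with hm
  have key : ∀ z : ℝ, gmu a b V z = gmu a b V (m + |z - m|) := by
    intro z
    rcases le_or_gt m z with hz | hz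
    · rw [abs_of_nonneg (by linarith), show m + (z - m) = z by ring]
    · calc gmu a b V z = gmu a b V (m + (z - m)) := by
            rw [show m + (z - m) = z by ring]
        _ = gmu a b V (m - (z - m)) := mu_symm a b V (z - m)
        _ = gmu a b V (m + |z - m|) := by
            rw [abs_of_neg (by linarith), show m - (z - m) = m + -(z - m) by ring]
  rw [key x, key y]
  have hanti := mu_anti a b V hab
  exact hanti (Set.mem_Ici.mpr (le_add_of_nonneg_right (abs_nonneg _)))
    (Set.mem_Ici.mpr (le_add_of_nonneg_right (abs_nonneg _)))
    (add_le_add_right h m)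


noncomputable def sfun (α β V : ℝ) : ℝ :=
  α * φ (α / Real.sqrt V) - β * φ (β / Real.sqrt V)

lemma φ_div_sqrt (x V : ℝ) (hV : 0 < V) :
    φ (x / Real.sqrt V) = (Real.sqrt (2 * Real.pi))⁻¹ * Real.exp (-(x ^ 2) / (2 * V)) := by
  rw [φ_def]
  congr 1
  rw [div_pow, Real.sq_sqrt hV.le]
  ring

lemma hasDerivAt_inner (c V : ℝ) (hV : 0 < V) :
    HasDerivAt (fun V : ℝ => c / Real.sqrt V) (-(c / (2 * V * Real.sqrt V))) V := by
  have hsV : 0 < Real.sqrt V := Real.sqrt_pos.mpr hV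
  have h1 : HasDerivAt Real.sqrt (1 / (2 * Real.sqrt V)) V := Real.hasDerivAt_sqrt hV.ne'
  have h2 := h1.inv hsV.ne'
  have h3 := h2.const_mul c
  have heq : (fun V : ℝ => c / Real.sqrt V) = fun y => c * (Real.sqrt y)⁻¹ := by
    funext x; rw [div_eq_mul_inv]
  rw [heq]
  refine h3.congr_deriv ?_
  rw [Real.sq_sqrt hV.le]
  ring

lemma hasDerivAt_gv (α β V : ℝ) (hV : 0 < V) :
    HasDerivAt (fun V => Φ (β / Real.sqrt V) - Φ (α / Real.sqrt V))
      (sfun α β V / (2 * V * Real.sqrt V)) V := by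
  have hb := (hasDerivAt_Φ (β / Real.sqrt V)).comp V (hasDerivAt_inner β V hV)
  have ha := (hasDerivAt_Φ (α / Real.sqrt V)).comp V (hasDerivAt_inner α V hV)
  refine (hb.sub ha).congr_deriv ?_
  have h2V : (2 * V * Real.sqrt V) ≠ 0 := by positivity
  unfold sfun
  field_simp
  ring

lemma sign_anti (α β : ℝ) (hαβ : α < β) {V W : ℝ} (hV : 0 < V) (hVW : V ≤ W)
    (hW : 0 ≤ sfun α β W) : 0 ≤ sfun α β V := by
  have hW0 : 0 < W := lt_of_lt_of_le hV hVW
  have hc : (0:ℝ) < (Real.sqrt (2 * Real.pi))⁻¹ := by positivity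
  rw [sfun, φ_div_sqrt _ _ hW0, φ_div_sqrt _ _ hW0] at hW
  rw [sfun, φ_div_sqrt _ _ hV, φ_div_sqrt _ _ hV]
  set c := (Real.sqrt (2 * Real.pi))⁻¹
  -- reduce to statement without c
  have hW' : β * Real.exp (-β ^ 2 / (2 * W)) ≤ α * Real.exp (-α ^ 2 / (2 * W)) := by
    nlinarith [hW, hc]
  have goal' : β * Real.exp (-β ^ 2 / (2 * V)) ≤ α * Real.exp (-α ^ 2 / (2 * V)) := by
    set k := β ^ 2 - α ^ 2 with hk
    have eW : Real.exp (-α ^ 2 / (2 * W)) = Real.exp (k / (2 * W)) * Real.exp (-β ^ 2 / (2 * W)) := by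
      rw [← Real.exp_add]; congr 1; field_simp; ring
    have eV : Real.exp (-α ^ 2 / (2 * V)) = Real.exp (k / (2 * V)) * Real.exp (-β ^ 2 / (2 * V)) := by
      rw [← Real.exp_add]; congr 1; field_simp; ring
    have eWpos : 0 < Real.exp (-β ^ 2 / (2 * W)) := Real.exp_pos _
    have eVpos : 0 < Real.exp (-β ^ 2 / (2 * V)) := Real.exp_pos _
    -- from hW' : β ≤ α * exp(k/(2W))
    have hQ : β ≤ α * Real.exp (k / (2 * W)) := by
      rw [eW] at hW'
      have := (mul_le_mul_iff_of_pos_right eWpos).mp (by linarith [hW'] : β * Real.exp (-β ^ 2 / (2 * W)) ≤ (α * Real.exp (k / (2 * W))) * Real.exp (-β ^ 2 / (2 * W)))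
      exact this
    have hP : β ≤ α * Real.exp (k / (2 * V)) := by
      rcases le_or_gt 0 α with hα | hα
      · -- α ≥ 0, then k ≥ 0 and exp(k/2V) ≥ exp(k/2W)
        have hk0 : 0 ≤ k := by nlinarith
        have hdiv : k / (2 * W) ≤ k / (2 * V) := by
          apply div_le_div_of_nonneg_left hk0 (by positivity) (by linarith)
        calc β ≤ α * Real.exp (k / (2 * W)) := hQ
          _ ≤ α * Real.exp (k / (2 * V)) :=
            mul_le_mul_of_nonneg_left (Real.exp_le_exp.mpr hdiv) hα
      · rcases le_or_gt β 0 with hβ | hβ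
        · -- α < β ≤ 0, k ≤ 0, exp(k/2V) ≤ exp(k/2W)
          have hk0 : k ≤ 0 := by nlinarith
          have hdiv : k / (2 * V) ≤ k / (2 * W) := by
            rw [div_le_div_iff₀ (by positivity) (by positivity)]
            nlinarith
          calc β ≤ α * Real.exp (k / (2 * W)) := hQ
            _ ≤ α * Real.exp (k / (2 * V)) := by
              have := Real.exp_le_exp.mpr hdiv
              nlinarith [Real.exp_pos (k / (2 * V)), Real.exp_pos (k / (2 * W))]
        · -- α < 0 < β : hQ is impossible
          exfalso
          have : α * Real.exp (k / (2 * W)) < 0 :=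
            mul_neg_of_neg_of_pos hα (Real.exp_pos _)
          linarith
    rw [eV]
    calc β * Real.exp (-β ^ 2 / (2 * V))
        ≤ (α * Real.exp (k / (2 * V))) * Real.exp (-β ^ 2 / (2 * V)) :=
          mul_le_mul_of_nonneg_right hP eVpos.le
      _ = α * (Real.exp (k / (2 * V)) * Real.exp (-β ^ 2 / (2 * V))) := by ring
  nlinarith [goal', hc]


lemma v_min (α β : ℝ) (hαβ : α < β) (VL VU : ℝ) (hVL : 0 < VL) (hVU : VL ≤ VU)
    {V : ℝ} (hV : V ∈ Set.Icc VL VU) :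
    min (Φ (β / Real.sqrt VL) - Φ (α / Real.sqrt VL))
        (Φ (β / Real.sqrt VU) - Φ (α / Real.sqrt VU))
      ≤ Φ (β / Real.sqrt V) - Φ (α / Real.sqrt V) := by
  set gv : ℝ → ℝ := fun V => Φ (β / Real.sqrt V) - Φ (α / Real.sqrt V) with hgv
  obtain ⟨hV1, hV2⟩ := hV
  have hV0 : 0 < V := lt_of_lt_of_le hVL hV1
  rcases le_or_gt 0 (sfun α β V) with hs | hs
  · -- gv monotone on [VL, V]
    have hmono : MonotoneOn gv (Set.Icc VL V) := by
      apply monotoneOn_of_deriv_nonneg (convex_Icc _ _)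
      · intro W hW
        have hW0 : 0 < W := lt_of_lt_of_le hVL hW.1
        exact ((hasDerivAt_gv α β W hW0).continuousAt).continuousWithinAt
      · intro W hW
        rw [interior_Icc] at hW
        have hW0 : 0 < W := lt_of_lt_of_le hVL hW.1.le
        exact (hasDerivAt_gv α β W hW0).differentiableAt.differentiableWithinAt
      · intro W hW
        rw [interior_Icc] at hW
        have hW0 : 0 < W := lt_of_lt_of_le hVL hW.1.le
        rw [(hasDerivAt_gv α β W hW0).deriv]
        have hsW : 0 ≤ sfun α β W := sign_anti α β hαβ hW0 hW.2.le hs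
        positivity
    have : gv VL ≤ gv V :=
      hmono (Set.mem_Icc.mpr ⟨le_refl _, hV1⟩) (Set.mem_Icc.mpr ⟨hV1, le_refl _⟩) hV1
    exact le_trans (min_le_left _ _) this
  · -- gv antitone on [V, VU]
    have hanti : AntitoneOn gv (Set.Icc V VU) := by
      apply antitoneOn_of_deriv_nonpos (convex_Icc _ _)
      · intro W hW
        have hW0 : 0 < W := lt_of_lt_of_le hV0 hW.1
        exact ((hasDerivAt_gv α β W hW0).continuousAt).continuousWithinAt
      · intro W hW
        rw [interior_Icc] at hW
        have hW0 : 0 < W := lt_of_lt_of_le hV0 hW.1.le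
        exact (hasDerivAt_gv α β W hW0).differentiableAt.differentiableWithinAt
      · intro W hW
        rw [interior_Icc] at hW
        have hW0 : 0 < W := lt_of_lt_of_le hV0 hW.1.le
        rw [(hasDerivAt_gv α β W hW0).deriv]
        have hsW : sfun α β W ≤ 0 := by
          by_contra hcon
          push_neg at hcon
          exact absurd (sign_anti α β hαβ hV0 hW.1.le hcon.le) (not_le.mpr hs)
        have hpos : 0 < 2 * W * Real.sqrt W := by positivity
        exact div_nonpos_iff.mpr (Or.inr ⟨hsW, hpos.le⟩)
    have : gv VU ≤ gv V :=
      hanti (Set.mem_Icc.mpr ⟨le_refl _, hV2⟩) (Set.mem_Icc.mpr ⟨hV2, le_refl _⟩) hV2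
    exact le_trans (min_le_right _ _) this

end Stmt6

/-- The minimum of (μ, Σ) ↦ ∫_a^b N(f|μ,Σ) df over the rectangle
[μL, μU] × [ΣL, ΣU] is attained at the endpoint of [μL, μU] farthest from
(a+b)/2 and at some Σ ∈ {ΣL, ΣU}. -/
theorem stmt6 (a b μL μU VL VU : ℝ) (hab : a < b) (hμ : μL ≤ μU)
    (hVL : 0 < VL) (hV : VL ≤ VU) :
    ∃ Vstar ∈ ({VL, VU} : Set ℝ),
      ∀ μ ∈ Set.Icc μL μU, ∀ V ∈ Set.Icc VL VU,
        (∫ f in a..b,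
            gaussPDF (if |μU - (a + b) / 2| ≤ |μL - (a + b) / 2| then μL else μU)
              Vstar f)
          ≤ ∫ f in a..b, gaussPDF μ V f := by
  open Stmt6 in
  set μs := if |μU - (a + b) / 2| ≤ |μL - (a + b) / 2| then μL else μU with hμs
  have hαβ : a - μs < b - μs := by linarith
  have key : ∀ V ∈ Set.Icc VL VU,
      min (Stmt6.gmu a b VL μs) (Stmt6.gmu a b VU μs) ≤ Stmt6.gmu a b V μs := by
    intro V hVmem
    exact Stmt6.v_min (a - μs) (b - μs) hαβ VL VU hVL hV hVmem
  have habs : ∀ μ ∈ Set.Icc μL μU, |μ - (a + b) / 2| ≤ |μs - (a + b) / 2| := by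
    intro μ hμmem
    have h1 : μL - (a + b) / 2 ≤ μ - (a + b) / 2 := by linarith [hμmem.1]
    have h2 : μ - (a + b) / 2 ≤ μU - (a + b) / 2 := by linarith [hμmem.2]
    have hmax := abs_le_max_abs_abs h1 h2
    by_cases hcond : |μU - (a + b) / 2| ≤ |μL - (a + b) / 2|
    · rw [hμs, if_pos hcond]
      rwa [max_eq_left hcond] at hmax
    · rw [hμs, if_neg hcond]
      rwa [max_eq_right (le_of_not_ge hcond)] at hmax
  have main : ∀ Vs ∈ Set.Icc VL VU, (0 < Vs) →
      (Stmt6.gmu a b Vs μs = min (Stmt6.gmu a b VL μs) (Stmt6.gmu a b VU μs)) →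
      ∀ μ ∈ Set.Icc μL μU, ∀ V ∈ Set.Icc VL VU,
        (∫ f in a..b, gaussPDF μs Vs f) ≤ ∫ f in a..b, gaussPDF μ V f := by
    intro Vs hVsmem hVs0 hVsmin μ hμmem V hVmem
    have hV0 : 0 < V := lt_of_lt_of_le hVL hVmem.1
    rw [Stmt6.repr μs Vs hVs0 a b, Stmt6.repr μ V hV0 a b]
    have step1 : Stmt6.gmu a b Vs μs ≤ Stmt6.gmu a b V μs := by
      rw [hVsmin]; exact key V hVmem
    have step2 : Stmt6.gmu a b V μs ≤ Stmt6.gmu a b V μ :=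
      Stmt6.mu_key a b V hab.le (habs μ hμmem)
    exact le_trans step1 step2
  rcases le_total (Stmt6.gmu a b VL μs) (Stmt6.gmu a b VU μs) with hc | hc
  · exact ⟨VL, Or.inl rfl, main VL (Set.mem_Icc.mpr ⟨le_refl _, hV⟩) hVL
      (min_eq_left hc).symm⟩
  · exact ⟨VU, Or.inr rfl, main VU (Set.mem_Icc.mpr ⟨hV, le_refl _⟩)
      (lt_of_lt_of_le hVL hV) (min_eq_right hc).symm⟩
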